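/- For every graph G, the maximum over all symmetric signings σ of the number of fixed points of the conjunctive network on G_σ equals max over H ∈ 𝓗'(G) of mis(H), where 𝓗'(G) is the set of graphs obtainable from G by repeatedly choosing a connected subgraph C, contracting C to a single vertex c, and attaching a new pendant vertex c' adjacent only to c (G itself is in 𝓗'(G)). -/

import Mathlib

/-- `S` is a fixed set of the conjunctive network with positive arcs `pos`,
negative arcs `neg`. -/
def IsFixedSet {V : Type} (pos neg : V → V → Prop) (S : Set V) : Prop :=
  ∀ v, v ∈ S ↔ (∀ u, pos u v → u ∈ S) ∧ (∀ u, neg u v → u ∉ S)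

/-- Number of fixed points of the conjunctive network. -/
noncomputable def fixc {V : Type} (pos neg : V → V → Prop) : ℕ :=
  Set.ncard {S : Set V | IsFixedSet pos neg S}

/-- Positive arcs of the signing `σ` of the graph `G`. -/
def posOf {V : Type} (G : SimpleGraph V) (σ : V → V → Bool) : V → V → Prop :=
  fun u v => G.Adj u v ∧ σ u v = true

/-- Negative arcs of the signing `σ` of the graph `G`. -/
def negOf {V : Type} (G : SimpleGraph V) (σ : V → V → Bool) : V → V → Prop :=
  fun u v => G.Adj u v ∧ σ u v = false

/-- `S` is a maximal independent set. -/
def IsMaxIndep {V : Type} (adj : V → V → Prop) (S : Set V) : Prop :=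
  (∀ u ∈ S, ∀ v ∈ S, ¬ adj u v) ∧ ∀ v, v ∉ S → ∃ u ∈ S, adj u v

/-- Number of maximal independent sets. -/
noncomputable def misc {V : Type} (adj : V → V → Prop) : ℕ :=
  Set.ncard {S : Set V | IsMaxIndep adj S}

/-- The graph `H/C` obtained from `H` by contracting `C` to a single vertex `c`
(`Sum.inr 0`) and attaching a new pendant vertex `c'` (`Sum.inr 1`) to `c`. -/
def quotG {W : Type} (H : SimpleGraph W) (C : Set W) :
    SimpleGraph ({v : W // v ∉ C} ⊕ Fin 2) where
  Adj a b :=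
    match a, b with
    | Sum.inl u, Sum.inl v => H.Adj u.1 v.1
    | Sum.inl u, Sum.inr i => i = 0 ∧ ∃ w ∈ C, H.Adj u.1 w
    | Sum.inr i, Sum.inl u => i = 0 ∧ ∃ w ∈ C, H.Adj u.1 w
    | Sum.inr i, Sum.inr j => i ≠ j
  symm := by
    constructor
    rintro (u | i) (v | j) h
    · exact h.symm
    · exact h
    · exact h
    · exact h.symm
  loopless := by
    constructor
    rintro (u | i) h
    · exact H.irrefl h
    · exact h rfl

/-- `𝓗'(G)`: graphs obtained from `G` by repeatedly contracting a connected subgraph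
(on at least two vertices) and attaching a pendant vertex to the contracted vertex. -/
inductive InH' {V : Type} (G : SimpleGraph V) : {W : Type} → SimpleGraph W → Prop where
  | base : InH' G G
  | step {W : Type} {H : SimpleGraph W} (C : Set W)
      (hconn : ∀ u ∈ C, ∀ v ∈ C,
        Relation.ReflTransGen (fun a b => a ∈ C ∧ b ∈ C ∧ H.Adj a b) u v)
      (hnt : ∃ u ∈ C, ∃ v ∈ C, u ≠ v)
      (hH : InH' G H) : InH' G (quotG H C)

/-!
Lifting: a symmetric signing `τ` of `H/C` lifts to `H` by making every edge inside `C` positive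
and giving every other edge the sign of its image. Taking preimages under the contraction map
`H → H/C` sends fixed points to fixed points, injectively, because the pendant vertex `c'` of a
fixed point is determined by `c`. So contractions never create more fixed points, and by
induction `mis(H) = fix(H⁻) ≤ fix(G_σ)` for `H ∈ 𝓗'(G)`, `H⁻` the all-negative signing.

Contracting: if `σ` has a positive edge `u₀v₀`, let `C` be the positive component of `u₀`.
Fixed points of `H_σ` are constant on `C` and all edges leaving `C` are negative, so contracting
`C`, keeping the signs outside `C` and making every other edge negative, maps fixed points of
`H_σ` injectively to fixed points of `H/C`, while strictly decreasing the number of positive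
arcs. Iterating reaches an all-negative signing of some `H ∈ 𝓗'(G)`, whose fixed points are
exactly the maximal independent sets of `H`.
-/

open Relation

theorem Relation.ReflTransGen.restrict {α : Type*} {r : α → α → Prop} {s : Set α}
    (hs : ∀ a b, a ∈ s → r a b → b ∈ s) {a b : α} (ha : a ∈ s) (h : ReflTransGen r a b) :
    ReflTransGen (fun x y => x ∈ s ∧ y ∈ s ∧ r x y) a b := by
  suffices b ∈ s ∧ ReflTransGen (fun x y => x ∈ s ∧ y ∈ s ∧ r x y) a b from this.2
  induction h with
  | refl => exact ⟨ha, .refl⟩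
  | tail _ hcd ih => exact ⟨hs _ _ ih.1 hcd, ih.2.tail ⟨ih.1, hs _ _ ih.1 hcd, hcd⟩⟩

section ConjunctiveNetwork

variable {V : Type}

def conjUpdate (pos neg : V → V → Prop) (S : Set V) (v : V) : Prop :=
  (∀ u, pos u v → u ∈ S) ∧ (∀ u, neg u v → u ∉ S)

def posArcs (G : SimpleGraph V) (σ : V → V → Bool) : Set (V × V) :=
  {p | posOf G σ p.1 p.2}

theorem isFixedSet_iff {pos neg : V → V → Prop} {S : Set V} :
    IsFixedSet pos neg S ↔ ∀ v, v ∈ S ↔ conjUpdate pos neg S v :=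
  Iff.rfl

theorem IsFixedSet.mem_of_reflTransGen {pos neg : V → V → Prop} {S : Set V}
    (hS : IsFixedSet pos neg S) {u w : V} (h : ReflTransGen pos w u) (hu : u ∈ S) : w ∈ S := by
  induction h using ReflTransGen.head_induction_on with
  | refl => exact hu
  | head hwx _ ih => exact ((isFixedSet_iff.1 hS _).1 ih).1 _ hwx

theorem conjUpdate_of_adj_iff_eq {G : SimpleGraph V} {σ : V → V → Bool} {S : Set V} {x z : V}
    (hx : ∀ y, G.Adj y x ↔ y = z) :
    conjUpdate (posOf G σ) (negOf G σ) S x ↔ (z ∈ S ↔ σ z x = true) := by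
  simp only [conjUpdate, posOf, negOf, hx, and_imp, forall_eq]
  cases σ z x <;> simp

theorem isFixedSet_iff_isMaxIndep {G : SimpleGraph V} {σ : V → V → Bool}
    (h : ∀ u v, G.Adj u v → σ u v = false) (S : Set V) :
    IsFixedSet (posOf G σ) (negOf G σ) S ↔ IsMaxIndep G.Adj S := by
  have hupdate : ∀ v, conjUpdate (posOf G σ) (negOf G σ) S v ↔ ∀ u ∈ S, ¬ G.Adj u v := by
    intro v
    simp only [conjUpdate, posOf, negOf]
    exact ⟨fun h' u hu hadj => h'.2 u ⟨hadj, h u v hadj⟩ hu,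
      fun h' => ⟨fun u hu => by simp [h u v hu.1] at hu, fun u hu huS => h' u huS hu.1⟩⟩
  simp only [isFixedSet_iff, hupdate, IsMaxIndep]
  constructor
  · intro hS
    refine ⟨fun u hu v hv => (hS v).1 hv u hu, fun v hv => ?_⟩
    by_contra! hdom
    exact hv ((hS v).2 hdom)
  · rintro ⟨hind, hdom⟩ v
    refine ⟨fun hv u hu => hind u hu v hv, fun hv => ?_⟩
    by_contra hvS
    obtain ⟨u, hu, hadj⟩ := hdom v hvS
    exact hv u hu hadj

theorem fixc_eq_misc {G : SimpleGraph V} {σ : V → V → Bool}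
    (h : ∀ u v, G.Adj u v → σ u v = false) :
    fixc (posOf G σ) (negOf G σ) = misc G.Adj := by
  simp only [fixc, misc, isFixedSet_iff_isMaxIndep h]

end ConjunctiveNetwork

section Contraction

abbrev QuotVertex {W : Type} (C : Set W) : Type :=
  {v : W // v ∉ C} ⊕ Fin 2

variable {W : Type} {H : SimpleGraph W} {C : Set W} {σ : W → W → Bool}
  {τ : QuotVertex C → QuotVertex C → Bool}

def ConnectedOn (H : SimpleGraph W) (C : Set W) : Prop :=
  ∀ u ∈ C, ∀ v ∈ C, ReflTransGen (fun a b => a ∈ C ∧ b ∈ C ∧ H.Adj a b) u v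

variable {W : Type} {H : SimpleGraph W} {C : Set W} {σ : W → W → Bool}
  {τ : QuotVertex C → QuotVertex C → Bool}

open Classical in
noncomputable def quotMap (C : Set W) (v : W) : QuotVertex C :=
  if h : v ∈ C then .inr 0 else .inl ⟨v, h⟩

theorem quotMap_of_mem {v : W} (h : v ∈ C) : quotMap C v = .inr 0 :=
  dif_pos h

theorem quotMap_of_notMem {v : W} (h : v ∉ C) : quotMap C v = .inl ⟨v, h⟩ :=
  dif_neg h

theorem quotMap_val (x : {v : W // v ∉ C}) : quotMap C x.1 = .inl x :=
  quotMap_of_notMem x.2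

theorem quotG_adj_quotMap {u v : W} (h : H.Adj u v) (hC : ¬(u ∈ C ∧ v ∈ C)) :
    (quotG H C).Adj (quotMap C u) (quotMap C v) := by
  by_cases hu : u ∈ C
  · have hv : v ∉ C := fun hv => hC ⟨hu, hv⟩
    rw [quotMap_of_mem hu, quotMap_of_notMem hv]
    exact ⟨rfl, u, hu, h.symm⟩
  · rw [quotMap_of_notMem hu]
    by_cases hv : v ∈ C
    · rw [quotMap_of_mem hv]
      exact ⟨rfl, v, hv, h⟩
    · rw [quotMap_of_notMem hv]
      exact h

theorem quotG_adj_quotMap_iff {v : W} (hv : v ∉ C) {y : QuotVertex C} :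
    (quotG H C).Adj y (quotMap C v) ↔ ∃ u, H.Adj u v ∧ quotMap C u = y := by
  refine ⟨fun h => ?_, fun ⟨u, h, hu⟩ => hu ▸ quotG_adj_quotMap h fun h' => hv h'.2⟩
  rw [quotMap_of_notMem hv] at h
  rcases y with x | i
  · exact ⟨x.1, h, quotMap_val x⟩
  · obtain ⟨rfl, w, hw, hadj⟩ := h
    exact ⟨w, hadj.symm, quotMap_of_mem hw⟩

theorem quotG_adj_inr_one_iff {y : QuotVertex C} :
    (quotG H C).Adj y (.inr 1) ↔ y = .inr 0 := by
  rcases y with x | i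
  · exact iff_of_false (fun h => absurd h.1 (by decide)) Sum.inl_ne_inr
  · fin_cases i <;> simp [quotG]

theorem conjUpdate_quotMap_iff {v : W} (hv : v ∉ C)
    (hsign : ∀ u, H.Adj u v → τ (quotMap C u) (quotMap C v) = σ u v)
    (F : Set (QuotVertex C)) :
    conjUpdate (posOf (quotG H C) τ) (negOf (quotG H C) τ) F (quotMap C v) ↔
      conjUpdate (posOf H σ) (negOf H σ) (quotMap C ⁻¹' F) v := by
  have key : ∀ (b : Bool) (P : QuotVertex C → Prop),
      (∀ y, (quotG H C).Adj y (quotMap C v) ∧ τ y (quotMap C v) = b → P y) ↔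
        ∀ u, H.Adj u v ∧ σ u v = b → P (quotMap C u) := by
    intro b P
    simp only [quotG_adj_quotMap_iff hv]
    constructor
    · rintro h u ⟨hadj, hb⟩
      exact h _ ⟨⟨u, hadj, rfl⟩, (hsign u hadj).trans hb⟩
    · rintro h _ ⟨⟨u, hadj, rfl⟩, hb⟩
      exact h u ⟨hadj, (hsign u hadj).symm.trans hb⟩
  exact and_congr (key true _) (key false _)

open Classical in
noncomputable def liftSign (C : Set W) (τ : QuotVertex C → QuotVertex C → Bool)
    (u v : W) : Bool :=
  if u ∈ C ∧ v ∈ C then true else τ (quotMap C u) (quotMap C v)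

theorem liftSign_of_mem {u v : W} (hu : u ∈ C) (hv : v ∈ C) : liftSign C τ u v = true :=
  if_pos ⟨hu, hv⟩

theorem liftSign_of_not_mem_and {u v : W} (h : ¬(u ∈ C ∧ v ∈ C)) :
    liftSign C τ u v = τ (quotMap C u) (quotMap C v) :=
  if_neg h

theorem liftSign_symm (hτ : ∀ a b, τ a b = τ b a) (u v : W) :
    liftSign C τ u v = liftSign C τ v u := by
  by_cases h : u ∈ C ∧ v ∈ C
  · rw [liftSign_of_mem h.1 h.2, liftSign_of_mem h.2 h.1]
  · rw [liftSign_of_not_mem_and h, liftSign_of_not_mem_and (h ∘ And.symm), hτ]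

theorem conjUpdate_preimage_quotMap_of_mem (hnbr : ∀ v ∈ C, ∃ u ∈ C, H.Adj u v)
    {F : Set (QuotVertex C)}
    (hF : IsFixedSet (posOf (quotG H C) τ) (negOf (quotG H C) τ) F) {v : W} (hv : v ∈ C) :
    quotMap C v ∈ F ↔
      conjUpdate (posOf H (liftSign C τ)) (negOf H (liftSign C τ)) (quotMap C ⁻¹' F) v := by
  have harc : ∀ u, u ∉ C → H.Adj u v → (quotG H C).Adj (quotMap C u) (quotMap C v) ∧
      liftSign C τ u v = τ (quotMap C u) (quotMap C v) :=
    fun u hu hadj => ⟨quotG_adj_quotMap hadj (hu ·.1), liftSign_of_not_mem_and (hu ·.1)⟩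
  constructor
  · intro hvF
    obtain ⟨hpos, hneg⟩ := (isFixedSet_iff.1 hF _).1 hvF
    refine ⟨fun u ⟨hadj, hu⟩ => ?_, fun u ⟨hadj, hu⟩ => ?_⟩
    · by_cases huC : u ∈ C
      · rwa [Set.mem_preimage, quotMap_of_mem huC, ← quotMap_of_mem hv]
      · obtain ⟨hadj', hsign⟩ := harc u huC hadj
        exact hpos _ ⟨hadj', hsign ▸ hu⟩
    · have huC : u ∉ C := fun huC => by simp [liftSign_of_mem huC hv] at hu
      obtain ⟨hadj', hsign⟩ := harc u huC hadj
      exact hneg _ ⟨hadj', hsign ▸ hu⟩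
  · rintro ⟨hpos, -⟩
    obtain ⟨u, hu, hadj⟩ := hnbr v hv
    have := hpos u ⟨hadj, liftSign_of_mem hu hv⟩
    rwa [Set.mem_preimage, quotMap_of_mem hu, ← quotMap_of_mem hv] at this

theorem IsFixedSet.preimage_quotMap (hnbr : ∀ v ∈ C, ∃ u ∈ C, H.Adj u v)
    {F : Set (QuotVertex C)}
    (hF : IsFixedSet (posOf (quotG H C) τ) (negOf (quotG H C) τ) F) :
    IsFixedSet (posOf H (liftSign C τ)) (negOf H (liftSign C τ)) (quotMap C ⁻¹' F) := by
  intro v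
  by_cases hv : v ∈ C
  · exact conjUpdate_preimage_quotMap_of_mem hnbr hF hv
  · exact (isFixedSet_iff.1 hF _).trans
      (conjUpdate_quotMap_iff hv (fun u _ => (liftSign_of_not_mem_and (hv ·.2)).symm) F)

theorem injOn_preimage_quotMap (hC : C.Nonempty) :
    Set.InjOn (fun F => quotMap C ⁻¹' F)
      {F | IsFixedSet (posOf (quotG H C) τ) (negOf (quotG H C) τ) F} := by
  intro F₁ hF₁ F₂ hF₂ h
  have hmem : ∀ v, quotMap C v ∈ F₁ ↔ quotMap C v ∈ F₂ := fun v => Set.ext_iff.1 h v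
  have hc : .inr 0 ∈ F₁ ↔ .inr 0 ∈ F₂ := by
    obtain ⟨a, ha⟩ := hC
    simpa only [quotMap_of_mem ha] using hmem a
  ext (x | i)
  · simpa only [quotMap_val] using hmem x.1
  · match i with
    | 0 => exact hc
    | 1 =>
      rw [isFixedSet_iff.1 hF₁, isFixedSet_iff.1 hF₂,
        conjUpdate_of_adj_iff_eq fun _ => quotG_adj_inr_one_iff,
        conjUpdate_of_adj_iff_eq fun _ => quotG_adj_inr_one_iff, hc]

theorem exists_adj_mem_of_connectedOn
    (hconn : ConnectedOn H C)
    (hnt : ∃ u ∈ C, ∃ v ∈ C, u ≠ v) {v : W} (hv : v ∈ C) : ∃ u ∈ C, H.Adj u v := by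
  obtain ⟨y, hy, hyv⟩ : ∃ y ∈ C, y ≠ v := by
    obtain ⟨a, ha, b, hb, hab⟩ := hnt
    by_cases hav : a = v
    · exact ⟨b, hb, fun hbv => hab (hav.trans hbv.symm)⟩
    · exact ⟨a, ha, hav⟩
  rcases (hconn v hv y hy).cases_head with h | ⟨x, ⟨-, hx, hadj⟩, -⟩
  · exact absurd h.symm hyv
  · exact ⟨x, hx, hadj.symm⟩

theorem exists_fixc_quotG_le [Finite W] (hconn : ConnectedOn H C)
    (hnt : ∃ u ∈ C, ∃ v ∈ C, u ≠ v) (hτ : ∀ a b, τ a b = τ b a) :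
    ∃ σ : W → W → Bool, (∀ u v, σ u v = σ v u) ∧
      fixc (posOf (quotG H C) τ) (negOf (quotG H C) τ) ≤ fixc (posOf H σ) (negOf H σ) := by
  obtain ⟨a, ha, -⟩ := id hnt
  refine ⟨liftSign C τ, liftSign_symm hτ,
    Set.ncard_le_ncard_of_injOn _ ?_ (injOn_preimage_quotMap ⟨a, ha⟩)⟩
  exact fun F hF => hF.preimage_quotMap fun _ => exists_adj_mem_of_connectedOn hconn hnt

def quotSign (C : Set W) (σ : W → W → Bool) :
    QuotVertex C → QuotVertex C → Bool
  | .inl u, .inl v => σ u v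
  | _, _ => false

theorem quotSign_symm (hσ : ∀ u v, σ u v = σ v u) (a b : QuotVertex C) :
    quotSign C σ a b = quotSign C σ b a := by
  rcases a with _ | _ <;> rcases b with _ | _ <;> simp only [quotSign, hσ]

/-- The image in `H/C` of a set `S` that is constant on `C ∋ u₀`. -/
def quotSet (C : Set W) (u₀ : W) (S : Set W) : Set (QuotVertex C) :=
  {y | match y with
    | .inl v => v.1 ∈ S
    | .inr 0 => u₀ ∈ S
    | .inr 1 => u₀ ∉ S}

section PositiveComponent

variable {u₀ : W}

def posComponent (H : SimpleGraph W) (σ : W → W → Bool) (u₀ : W) : Set W :=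
  {w | ReflTransGen (posOf H σ) u₀ w}

theorem mem_posComponent_self : u₀ ∈ posComponent H σ u₀ :=
  .refl

theorem mem_posComponent_of_posOf {w u : W} (hw : w ∈ posComponent H σ u₀)
    (h : posOf H σ w u) : u ∈ posComponent H σ u₀ :=
  ReflTransGen.tail hw h

theorem sign_eq_false_of_mem_posComponent {w u : W} (hw : w ∈ posComponent H σ u₀)
    (hu : u ∉ posComponent H σ u₀) (h : H.Adj w u) : σ w u = false :=
  Bool.eq_false_iff.2 fun hwu => hu (mem_posComponent_of_posOf hw ⟨h, hwu⟩)

theorem reflTransGen_posOf_symm (hσ : ∀ u v, σ u v = σ v u) {u v : W}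
    (h : ReflTransGen (posOf H σ) u v) :
    ReflTransGen (posOf H σ) v u :=
  haveI : Std.Symm (posOf H σ) := ⟨fun _ _ h => ⟨h.1.symm, (hσ _ _).trans h.2⟩⟩
  Std.Symm.symm _ _ h

theorem connectedOn_posComponent (hσ : ∀ u v, σ u v = σ v u) :
    ConnectedOn H (posComponent H σ u₀) :=
  fun _ hu _ hv => ReflTransGen.mono (fun _ _ h => ⟨h.1, h.2.1, h.2.2.1⟩) _ _
    (((reflTransGen_posOf_symm hσ hu).trans hv).restrict (fun _ _ => mem_posComponent_of_posOf) hu)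

theorem IsFixedSet.mem_iff_of_mem_posComponent (hσ : ∀ u v, σ u v = σ v u) {S : Set W}
    (hS : IsFixedSet (posOf H σ) (negOf H σ) S) {w : W} (hw : w ∈ posComponent H σ u₀) :
    w ∈ S ↔ u₀ ∈ S :=
  ⟨hS.mem_of_reflTransGen hw, hS.mem_of_reflTransGen (reflTransGen_posOf_symm hσ hw)⟩

theorem preimage_quotSet (hσ : ∀ u v, σ u v = σ v u) {S : Set W}
    (hS : IsFixedSet (posOf H σ) (negOf H σ) S) :
    quotMap (posComponent H σ u₀) ⁻¹' quotSet (posComponent H σ u₀) u₀ S = S := by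
  ext v
  by_cases hv : v ∈ posComponent H σ u₀
  · simp only [Set.mem_preimage, quotMap_of_mem hv, hS.mem_iff_of_mem_posComponent hσ hv]
    rfl
  · simp only [Set.mem_preimage, quotMap_of_notMem hv]
    rfl

theorem isFixedSet_quotSet (hσ : ∀ u v, σ u v = σ v u) {S : Set W}
    (hS : IsFixedSet (posOf H σ) (negOf H σ) S) :
    IsFixedSet (posOf (quotG H (posComponent H σ u₀)) (quotSign (posComponent H σ u₀) σ))
      (negOf (quotG H (posComponent H σ u₀)) (quotSign (posComponent H σ u₀) σ))
      (quotSet (posComponent H σ u₀) u₀ S) := by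
  set C := posComponent H σ u₀
  rintro (x | i)
  · have hsign : ∀ u, H.Adj u x.1 →
        quotSign C σ (quotMap C u) (quotMap C x.1) = σ u x.1 := by
      intro u hadj
      by_cases hu : u ∈ C
      · rw [quotMap_of_mem hu, sign_eq_false_of_mem_posComponent hu x.2 hadj]
        rfl
      · rw [quotMap_of_notMem hu, quotMap_val]
        rfl
    have h := conjUpdate_quotMap_iff x.2 hsign (quotSet C u₀ S)
    rw [preimage_quotSet hσ hS, quotMap_val] at h
    exact (hS x.1).trans h.symm
  · match i with
    | 0 =>
      show u₀ ∈ S ↔ _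
      constructor
      · intro h₀
        refine ⟨fun y ⟨_, hy⟩ => by rcases y with _ | _ <;> simp [quotSign] at hy, ?_⟩
        rintro (x | j) ⟨hadj, -⟩
        · obtain ⟨-, w, hw, hadj⟩ := hadj
          intro hx
          exact ((hS x.1).1 hx).2 w
            ⟨hadj.symm, sign_eq_false_of_mem_posComponent hw x.2 hadj.symm⟩
            ((hS.mem_iff_of_mem_posComponent hσ hw).2 h₀)
        · match j, hadj with
          | 1, _ => exact fun h => h h₀
      · rintro ⟨-, hneg⟩
        by_contra h₀
        exact hneg (.inr 1) ⟨(by decide : (1 : Fin 2) ≠ 0), rfl⟩ h₀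
    | 1 =>
      refine Iff.trans ?_ (conjUpdate_of_adj_iff_eq fun _ => quotG_adj_inr_one_iff).symm
      show u₀ ∉ S ↔ (u₀ ∈ S ↔ false = true)
      simp

theorem ncard_posArcs_quotSign_lt [Finite W] {v₀ : W} (hu₀ : u₀ ∈ C)
    (h₀ : posOf H σ u₀ v₀) :
    (posArcs (quotG H C) (quotSign C σ)).ncard < (posArcs H σ).ncard := by
  have hsub : posArcs (quotG H C) (quotSign C σ) ⊆
      Prod.map (quotMap C) (quotMap C) '' {p ∈ posArcs H σ | p.1 ∉ C} := by
    rintro ⟨x | _, y | _⟩ ⟨hadj, hpos⟩ <;> simp only [quotSign, Bool.false_eq_true] at hpos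
    exact ⟨(x.1, y.1), ⟨⟨hadj, hpos⟩, x.2⟩, by simp only [Prod.map, quotMap_val]⟩
  calc _ ≤ (Prod.map (quotMap C) (quotMap C) '' {p ∈ posArcs H σ | p.1 ∉ C}).ncard :=
        Set.ncard_le_ncard hsub
    _ ≤ {p ∈ posArcs H σ | p.1 ∉ C}.ncard := Set.ncard_image_le
    _ < (posArcs H σ).ncard :=
        Set.ncard_lt_ncard ⟨fun _ h => h.1, fun h => (h (a := (u₀, v₀)) h₀).2 hu₀⟩

end PositiveComponent

theorem exists_contraction_fixc_le [Finite W] (hσ : ∀ u v, σ u v = σ v u)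
    {u₀ v₀ : W} (h₀ : posOf H σ u₀ v₀) :
    ∃ C : Set W, ConnectedOn H C ∧
      (∃ u ∈ C, ∃ v ∈ C, u ≠ v) ∧
      ∃ τ : QuotVertex C → QuotVertex C → Bool,
        (∀ a b, τ a b = τ b a) ∧
        fixc (posOf H σ) (negOf H σ) ≤ fixc (posOf (quotG H C) τ) (negOf (quotG H C) τ) ∧
        (posArcs (quotG H C) τ).ncard < (posArcs H σ).ncard := by
  refine ⟨posComponent H σ u₀, connectedOn_posComponent hσ,
    ⟨u₀, mem_posComponent_self, v₀, ReflTransGen.single h₀, h₀.1.ne⟩,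
    quotSign _ σ, quotSign_symm hσ, ?_, ncard_posArcs_quotSign_lt mem_posComponent_self h₀⟩
  exact Set.ncard_le_ncard_of_injOn _ (fun S hS => isFixedSet_quotSet hσ hS)
    (Set.LeftInvOn.injOn fun S hS => preimage_quotSet hσ hS)

end Contraction

theorem InH'.trans {U V W : Type} {F : SimpleGraph U} {G : SimpleGraph V} {H : SimpleGraph W}
    (hG : InH' F G) (hH : InH' G H) : InH' F H := by
  induction hH with
  | base => exact hG
  | step C hconn hnt _ ih => exact .step C hconn hnt ih

theorem InH'.finite {V W : Type} [Finite V] {G : SimpleGraph V} {H : SimpleGraph W}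
    (hH : InH' G H) : Finite W := by
  induction hH with
  | base => infer_instance
  | step _ _ _ _ ih => infer_instance

theorem InH'.exists_fixc_le {V W : Type} [Finite V] {G : SimpleGraph V} {H : SimpleGraph W}
    (hH : InH' G H) (τ : W → W → Bool) (hτ : ∀ a b, τ a b = τ b a) :
    ∃ σ : V → V → Bool, (∀ u v, σ u v = σ v u) ∧
      fixc (posOf H τ) (negOf H τ) ≤ fixc (posOf G σ) (negOf G σ) := by
  induction hH with
  | base => exact ⟨τ, hτ, le_rfl⟩
  | step C hconn hnt hH ih =>
    have := hH.finite
    obtain ⟨σ₁, hσ₁, h₁⟩ := exists_fixc_quotG_le hconn hnt hτ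
    obtain ⟨σ, hσ, h⟩ := ih σ₁ hσ₁
    exact ⟨σ, hσ, h₁.trans h⟩

theorem exists_InH'_fixc_le_misc {W : Type} [Finite W] (H : SimpleGraph W) (σ : W → W → Bool)
    (hσ : ∀ u v, σ u v = σ v u) :
    ∃ (W' : Type) (H' : SimpleGraph W'), InH' H H' ∧
      fixc (posOf H σ) (negOf H σ) ≤ misc H'.Adj := by
  by_cases hpos : ∃ u v, posOf H σ u v
  · obtain ⟨u₀, v₀, h₀⟩ := hpos
    obtain ⟨C, hconn, hnt, τ, hτ, hle, hlt⟩ := exists_contraction_fixc_le hσ h₀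
    obtain ⟨W', H', hH', hle'⟩ := exists_InH'_fixc_le_misc (quotG H C) τ hτ
    exact ⟨W', H', (InH'.step C hconn hnt .base).trans hH', hle.trans hle'⟩
  · simp only [not_exists] at hpos
    exact ⟨W, H, .base,
      (fixc_eq_misc fun u v hadj => Bool.eq_false_iff.2 fun h => hpos u v ⟨hadj, h⟩).le⟩
termination_by (posArcs H σ).ncard

/-- `max_σ fix(G_σ) = max_{H ∈ 𝓗'(G)} mis(H)`. -/
theorem stmt15 {V : Type} [Fintype V] (G : SimpleGraph V) :
    ∃ σ : V → V → Bool, (∀ u v, σ u v = σ v u) ∧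
      (∀ σ' : V → V → Bool, (∀ u v, σ' u v = σ' v u) →
        fixc (posOf G σ') (negOf G σ') ≤ fixc (posOf G σ) (negOf G σ)) ∧
      (∃ (W : Type) (H : SimpleGraph W), InH' G H ∧
        misc H.Adj = fixc (posOf G σ) (negOf G σ)) ∧
      (∀ (W : Type) (H : SimpleGraph W), InH' G H →
        misc H.Adj ≤ fixc (posOf G σ) (negOf G σ)) := by
  have : Nonempty {σ : V → V → Bool // ∀ u v, σ u v = σ v u} :=
    ⟨⟨fun _ _ => false, fun _ _ => rfl⟩⟩
  obtain ⟨⟨σ, hσ⟩, hmax⟩ := Finite.exists_max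
    fun s : {σ : V → V → Bool // ∀ u v, σ u v = σ v u} => fixc (posOf G s.1) (negOf G s.1)
  have hmis : ∀ (W : Type) (H : SimpleGraph W), InH' G H →
      misc H.Adj ≤ fixc (posOf G σ) (negOf G σ) := by
    intro W H hH
    obtain ⟨σ', hσ', hle⟩ := hH.exists_fixc_le (fun _ _ => false) fun _ _ => rfl
    rw [← fixc_eq_misc fun _ _ _ => rfl]
    exact hle.trans (hmax ⟨σ', hσ'⟩)
  obtain ⟨W, H, hH, hle⟩ := exists_InH'_fixc_le_misc G σ hσ
  exact ⟨σ, hσ, fun σ' hσ' => hmax ⟨σ', hσ'⟩, ⟨W, H, hH, (hmis W H hH).antisymm hle⟩,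
    hmis⟩
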